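/- There exists a reciprocal probability measure that is not Markov. Concretely, on the three-point state space {a,b,c} with Ω the space of càdlàg paths on [0,1], the measure P = (1/2)(δ_{abc} + δ_{cba}), where abc is the path equal to a on [0,1/3), c on [1/3,2/3), b on [2/3,1] (and cba its reversal of states), is reciprocal but satisfies P(X_1 = a | X_0 = a, X_{1/3} = b) = 0 while P(X_1 = a | X_{1/3} = b) = 1/2; hence P is not Markov. -/

import Mathlib

/-!
Under `P = (δ_{abc} + δ_{cba}) / 2` every conditional expectation is computed by hand: if a
σ-algebra separates the two paths it is evaluation at the path, otherwise it is the average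
over both. Conditioning on `(X s, X u)` either separates the paths, and then everything
factorizes, or both paths sit at `b` at times `s` and `u`, hence on all of `[s, u]`, so every
event of the window `[s, u]` contains both paths or neither and factors out of the average.
At time `1/3`, in contrast, `X (1/3) = b` identifies the two paths while `X 0` determines
`X 1`, which breaks the Markov property.
-/

open MeasureTheory

noncomputable section

variable {Ω 𝒳 : Type*}

/-- σ-algebra generated by the canonical process on the time window `[s,u]`. -/
def window [MeasurableSpace 𝒳] (X : ℝ → Ω → 𝒳) (s u : ℝ) : MeasurableSpace Ω :=
  ⨆ r ∈ Set.Icc s u, MeasurableSpace.comap (X r) inferInstance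

/-- σ-algebra generated by the position at time `t`. -/
def at1 [MeasurableSpace 𝒳] (X : ℝ → Ω → 𝒳) (t : ℝ) : MeasurableSpace Ω :=
  MeasurableSpace.comap (X t) inferInstance

/-- σ-algebra generated by the pair of positions at times `s` and `u`. -/
def at2 [MeasurableSpace 𝒳] (X : ℝ → Ω → 𝒳) (s u : ℝ) : MeasurableSpace Ω :=
  MeasurableSpace.comap (fun ω => (X s ω, X u ω)) inferInstance

/-- Indicator function of an event, real-valued. -/
def ind (A : Set Ω) : Ω → ℝ := A.indicator (fun _ => 1)

/-- The two-sided (symmetric) Markov property: for every time `t ∈ [0,1]`, past and future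
events are conditionally independent given the present position `X t`. -/
def IsMarkov [MeasurableSpace Ω] [MeasurableSpace 𝒳]
    (X : ℝ → Ω → 𝒳) (P : Measure Ω) : Prop :=
  ∀ t ∈ Set.Icc (0:ℝ) 1, ∀ A B : Set Ω,
    MeasurableSet[window X 0 t] A → MeasurableSet[window X t 1] B →
    P[ind (A ∩ B) | at1 X t] =ᵐ[P] P[ind A | at1 X t] * P[ind B | at1 X t]

/-- The reciprocal property: for all `0 ≤ s ≤ u ≤ 1`, the events inside `[s,u]` and those
outside are conditionally independent given the pair `(X s, X u)`. -/
def IsReciprocal [MeasurableSpace Ω] [MeasurableSpace 𝒳]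
    (X : ℝ → Ω → 𝒳) (P : Measure Ω) : Prop :=
  ∀ s u : ℝ, 0 ≤ s → s ≤ u → u ≤ 1 → ∀ A B C : Set Ω,
    MeasurableSet[window X 0 s] A → MeasurableSet[window X s u] B →
    MeasurableSet[window X u 1] C →
    P[ind (A ∩ B ∩ C) | at2 X s u] =ᵐ[P]
      P[ind (A ∩ C) | at2 X s u] * P[ind B | at2 X s u]

/-- The forward Markov property. -/
def IsForwardMarkov [MeasurableSpace Ω] [MeasurableSpace 𝒳]
    (X : ℝ → Ω → 𝒳) (P : Measure Ω) : Prop :=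
  ∀ t ∈ Set.Icc (0:ℝ) 1, ∀ B : Set Ω, MeasurableSet[window X t 1] B →
    P[ind B | window X 0 t] =ᵐ[P] P[ind B | at1 X t]

namespace ThreeStates

/-- The three-point state space `{a, b, c}`, encoded as `Fin 3` (`a = 0`, `b = 1`, `c = 2`). -/
abbrev 𝒮 : Type := Fin 3

/-- Path space: functions from `ℝ` to the three-point state space. -/
abbrev Path : Type := ℝ → 𝒮

/-- The canonical process. -/
def Xc : ℝ → Path → 𝒮 := fun t ω => ω t

/-- The path `abc`: equal to `a` on `[0,1/3)`, `b` on `[1/3,2/3)`, `c` on `[2/3,1]`. -/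
def wabc : Path := fun t => if t < 1/3 then 0 else if t < 2/3 then 1 else 2

/-- The path `cba`: equal to `c` on `[0,1/3)`, `b` on `[1/3,2/3)`, `a` on `[2/3,1]`. -/
def wcba : Path := fun t => if t < 1/3 then 2 else if t < 2/3 then 1 else 0

/-- The measure `P = (1/2)(δ_{abc} + δ_{cba})`. -/
def Pmix : Measure Path := (2:ENNReal)⁻¹ • (Measure.dirac wabc + Measure.dirac wcba)

end ThreeStates

lemma MeasurableSet.mem_iff_mem_of_comap {β : Type*} [mβ : MeasurableSpace β] {g : Ω → β}
    {D : Set Ω} (hD : MeasurableSet[mβ.comap g] D) {x y : Ω} (hxy : g x = g y) :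
    x ∈ D ↔ y ∈ D := by
  obtain ⟨S, -, rfl⟩ := hD
  simp [hxy]

lemma ind_inter (A B : Set Ω) : ind (A ∩ B) = ind A * ind B :=
  Set.inter_indicator_one

lemma stronglyMeasurable_ind [MeasurableSpace Ω] {A : Set Ω} (hA : MeasurableSet A) :
    StronglyMeasurable (ind A) :=
  stronglyMeasurable_const.indicator hA

section DiracMix

variable {m : MeasurableSpace Ω} [m₀ : MeasurableSpace Ω] {x y : Ω}

def diracMix (x y : Ω) : Measure Ω :=
  (2 : ENNReal)⁻¹ • (Measure.dirac x + Measure.dirac y)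

instance (x y : Ω) : IsProbabilityMeasure (diracMix x y) :=
  ⟨by simp [diracMix, ENNReal.inv_two_add_inv_two]⟩

lemma diracMix_apply {s : Set Ω} (hs : MeasurableSet s) :
    diracMix x y s = 2⁻¹ * (s.indicator 1 x + s.indicator 1 y) := by
  simp [diracMix, Measure.dirac_apply' _ hs, mul_add]

lemma integrable_diracMix {f : Ω → ℝ} (hf : StronglyMeasurable f) :
    Integrable f (diracMix x y) :=
  ((integrable_dirac' hf enorm_lt_top).add_measure
    (integrable_dirac' hf enorm_lt_top)).smul_measure (by simp)

lemma setIntegral_diracMix {f : Ω → ℝ} (hf : StronglyMeasurable f) {s : Set Ω}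
    (hs : MeasurableSet s) :
    ∫ ω in s, f ω ∂diracMix x y = 2⁻¹ * (s.indicator f x + s.indicator f y) := by
  classical
  rw [diracMix, Measure.restrict_smul, Measure.restrict_add, integral_smul_measure,
    integral_add_measure (integrable_dirac' hf enorm_lt_top).restrict
      (integrable_dirac' hf enorm_lt_top).restrict,
    setIntegral_dirac' hf x hs, setIntegral_dirac' hf y hs]
  simp [Set.indicator_apply]

open scoped Classical in
lemma condExp_diracMix_of_separates (hm : m ≤ m₀) {D : Set Ω} (hD : MeasurableSet[m] D)
    (hx : x ∈ D) (hy : y ∉ D) {f : Ω → ℝ} (hf : StronglyMeasurable f) :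
    (diracMix x y)[f|m] =ᵐ[diracMix x y] D.piecewise (fun _ ↦ f x) (fun _ ↦ f y) := by
  have hgm : StronglyMeasurable[m] (D.piecewise (fun _ ↦ f x) (fun _ ↦ f y)) :=
    stronglyMeasurable_const.piecewise hD stronglyMeasurable_const
  refine (ae_eq_condExp_of_forall_setIntegral_eq hm (integrable_diracMix hf)
    (fun s _ _ ↦ (integrable_diracMix (hgm.mono hm)).integrableOn)
    (fun s hs _ ↦ ?_) hgm.aestronglyMeasurable).symm
  rw [setIntegral_diracMix (hgm.mono hm) (hm s hs), setIntegral_diracMix hf (hm s hs)]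
  simp [Set.indicator_apply, hx, hy]

lemma condExp_diracMix_of_inseparable (hm : m ≤ m₀)
    (hxy : ∀ D, MeasurableSet[m] D → (x ∈ D ↔ y ∈ D)) {f : Ω → ℝ}
    (hf : StronglyMeasurable f) :
    (diracMix x y)[f|m] =ᵐ[diracMix x y] fun _ ↦ 2⁻¹ * (f x + f y) := by
  refine (ae_eq_condExp_of_forall_setIntegral_eq hm (integrable_diracMix hf)
    (fun s _ _ ↦ (integrable_const _).integrableOn)
    (fun s hs _ ↦ ?_) stronglyMeasurable_const.aestronglyMeasurable).symm
  rw [setIntegral_diracMix stronglyMeasurable_const (hm s hs), setIntegral_diracMix hf (hm s hs)]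
  by_cases hxs : x ∈ s
  · simp only [Set.indicator_of_mem hxs, Set.indicator_of_mem ((hxy s hs).mp hxs)]
    ring
  · simp [hxs, mt (hxy s hs).mpr hxs]

lemma condExp_diracMix_mul_of_separates (hm : m ≤ m₀) {D : Set Ω} (hD : MeasurableSet[m] D)
    (hx : x ∈ D) (hy : y ∉ D) {f g : Ω → ℝ} (hf : StronglyMeasurable f)
    (hg : StronglyMeasurable g) :
    (diracMix x y)[f * g|m] =ᵐ[diracMix x y] (diracMix x y)[f|m] * (diracMix x y)[g|m] := by
  filter_upwards [condExp_diracMix_of_separates hm hD hx hy (hf.mul hg),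
    condExp_diracMix_of_separates hm hD hx hy hf,
    condExp_diracMix_of_separates hm hD hx hy hg] with ω hfg hf hg
  by_cases hω : ω ∈ D <;> simp [hfg, hf, hg, hω]

lemma condExp_diracMix_mul_of_inseparable (hm : m ≤ m₀)
    (hxy : ∀ D, MeasurableSet[m] D → (x ∈ D ↔ y ∈ D)) {f g : Ω → ℝ}
    (hf : StronglyMeasurable f) (hg : StronglyMeasurable g) (hgxy : g x = g y) :
    (diracMix x y)[f * g|m] =ᵐ[diracMix x y] (diracMix x y)[f|m] * (diracMix x y)[g|m] := by
  filter_upwards [condExp_diracMix_of_inseparable hm hxy (hf.mul hg),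
    condExp_diracMix_of_inseparable hm hxy hf,
    condExp_diracMix_of_inseparable hm hxy hg] with ω hfg hf hg
  simp only [hfg, hf, hg, Pi.mul_apply, hgxy]
  ring

end DiracMix

section Window

variable [MeasurableSpace 𝒳] {X : ℝ → Ω → 𝒳}

lemma at1_le_window {s t u : ℝ} (ht : t ∈ Set.Icc s u) : at1 X t ≤ window X s u :=
  le_iSup₂ (f := fun r (_ : r ∈ Set.Icc s u) ↦ MeasurableSpace.comap (X r) inferInstance) t ht

lemma window_le [m₀ : MeasurableSpace Ω] (hX : ∀ t, Measurable (X t)) (s u : ℝ) :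
    window X s u ≤ m₀ :=
  iSup₂_le fun r _ ↦ (hX r).comap_le

lemma mem_iff_mem_of_measurableSet_window {s u : ℝ} {B : Set Ω}
    (hB : MeasurableSet[window X s u] B) {ω ω' : Ω}
    (h : ∀ t ∈ Set.Icc s u, X t ω = X t ω') :
    ω ∈ B ↔ ω' ∈ B := by
  let restr : Ω → Set.Icc s u → 𝒳 := fun ω t ↦ X t ω
  have hle : window X s u ≤ MeasurableSpace.comap restr MeasurableSpace.pi :=
    iSup₂_le fun r hr ↦ by
      rw [show X r = (fun φ ↦ φ ⟨r, hr⟩) ∘ restr from rfl, ← MeasurableSpace.comap_comp]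
      exact MeasurableSpace.comap_mono (measurable_pi_apply _).comap_le
  exact (hle B hB).mem_iff_mem_of_comap (g := restr) (funext fun t ↦ h t t.2)

end Window

namespace ThreeStates

lemma measurable_Xc (t : ℝ) : Measurable (Xc t) :=
  measurable_pi_apply t

@[simp] lemma c_ne_a : (2 : 𝒮) ≠ 0 := by decide

@[simp] lemma wabc_zero : wabc 0 = 0 := by norm_num [wabc]
@[simp] lemma wabc_third : wabc (1/3) = 1 := by norm_num [wabc]
@[simp] lemma wabc_one : wabc 1 = 2 := by norm_num [wabc]
@[simp] lemma wcba_zero : wcba 0 = 2 := by norm_num [wcba]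
@[simp] lemma wcba_third : wcba (1/3) = 1 := by norm_num [wcba]
@[simp] lemma wcba_one : wcba 1 = 0 := by norm_num [wcba]

lemma wabc_eq_wcba_iff {t : ℝ} : wabc t = wcba t ↔ t ∈ Set.Ico (1/3) (2/3) := by
  unfold wabc wcba
  split_ifs <;> grind

lemma Pmix_eq_diracMix : Pmix = diracMix wabc wcba := rfl

lemma isReciprocal_Pmix : IsReciprocal Xc Pmix := by
  intro s u _ _ _ A B C hA hB hC
  have hm : at2 Xc s u ≤ _ := ((measurable_Xc s).prodMk (measurable_Xc u)).comap_le
  have hAC := (window_le measurable_Xc 0 s A hA).inter (window_le measurable_Xc u 1 C hC)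
  have hB' := window_le measurable_Xc s u B hB
  rw [Set.inter_right_comm, ind_inter, Pmix_eq_diracMix]
  by_cases hsep : (wabc s, wabc u) = (wcba s, wcba u)
  · have hs := wabc_eq_wcba_iff.mp (Prod.ext_iff.mp hsep).1
    have hu := wabc_eq_wcba_iff.mp (Prod.ext_iff.mp hsep).2
    have hBxy : ind B wabc = ind B wcba := by
      have := mem_iff_mem_of_measurableSet_window (ω := wabc) (ω' := wcba) hB fun t ht ↦
        wabc_eq_wcba_iff.mpr ⟨hs.1.trans ht.1, ht.2.trans_lt hu.2⟩
      by_cases h : wabc ∈ B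
      · simp [ind, h, this.mp h]
      · simp [ind, h, mt this.mpr h]
    exact condExp_diracMix_mul_of_inseparable hm
      (fun _ hD ↦ hD.mem_iff_mem_of_comap (x := wabc) (y := wcba) hsep)
      (stronglyMeasurable_ind hAC) (stronglyMeasurable_ind hB') hBxy
  · exact condExp_diracMix_mul_of_separates hm (x := wabc) (y := wcba)
      (D := (fun ω ↦ (Xc s ω, Xc u ω)) ⁻¹' {(wabc s, wabc u)})
      ⟨_, measurableSet_singleton _, rfl⟩ rfl (fun h ↦ hsep (Set.mem_singleton_iff.mp h).symm)
      (stronglyMeasurable_ind hAC) (stronglyMeasurable_ind hB')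

lemma measurableSet_at1_eq (t : ℝ) (i : 𝒮) : MeasurableSet[at1 Xc t] {ω : Path | ω t = i} :=
  ⟨{i}, measurableSet_singleton i, rfl⟩

lemma mem_iff_mem_of_measurableSet_at1_third {D : Set Path}
    (hD : MeasurableSet[at1 Xc (1/3)] D) : wabc ∈ D ↔ wcba ∈ D :=
  hD.mem_iff_mem_of_comap (g := Xc (1/3)) (x := wabc) (y := wcba)
    (wabc_third.trans wcba_third.symm)

lemma not_isForwardMarkov_Pmix : ¬ IsForwardMarkov Xc Pmix := by
  intro hFM
  have hB := stronglyMeasurable_ind ((measurable_Xc 1).comap_le _ (measurableSet_at1_eq 1 0))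
  have hpast := condExp_diracMix_of_separates (window_le measurable_Xc 0 (1/3))
    (at1_le_window (by norm_num) _ (measurableSet_at1_eq 0 0)) (x := wabc) (y := wcba)
    (by simp) (by simp) hB
  have hpresent := condExp_diracMix_of_inseparable (measurable_Xc (1/3)).comap_le
    (fun _ ↦ mem_iff_mem_of_measurableSet_at1_third) hB
  have hmarkov :=
    hFM (1/3) (by norm_num) _ (at1_le_window (by norm_num) _ (measurableSet_at1_eq 1 0))
  obtain ⟨ω, h⟩ := (hpast.symm.trans (hmarkov.trans hpresent)).exists
  by_cases hω : ω 0 = 0 <;> norm_num [ind, Set.indicator_apply, hω] at h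

lemma not_isMarkov_Pmix : ¬ IsMarkov Xc Pmix := by
  intro hM
  have hA := stronglyMeasurable_ind ((measurable_Xc 0).comap_le _ (measurableSet_at1_eq 0 0))
  have hB := stronglyMeasurable_ind ((measurable_Xc 1).comap_le _ (measurableSet_at1_eq 1 0))
  have hmarkov := hM (1/3) (by norm_num) _ _
    (at1_le_window (by norm_num) _ (measurableSet_at1_eq 0 0))
    (at1_le_window (by norm_num) _ (measurableSet_at1_eq 1 0))
  rw [ind_inter] at hmarkov
  have hpresent (f) := condExp_diracMix_of_inseparable (x := wabc) (y := wcba)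
    (measurable_Xc (1/3)).comap_le (fun _ ↦ mem_iff_mem_of_measurableSet_at1_third) (f := f)
  obtain ⟨ω, h⟩ := (((hpresent _ (hA.mul hB)).symm.trans hmarkov).trans
    ((hpresent _ hA).mul (hpresent _ hB))).exists
  norm_num [ind, Set.indicator_apply] at h

/-- there exists a reciprocal probability measure which is not Markov:
the half-half mixture of the two deterministic three-state paths is reciprocal, gives
conditional probability `0` to `{X_1 = a}` given `X_0 = a, X_{1/3} = b` and `1/2` given
`X_{1/3} = b` alone, and fails the (forward) Markov property. -/
theorem reciprocal_not_markov :
    IsProbabilityMeasure Pmix ∧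
    IsReciprocal Xc Pmix ∧
    -- P(X_1 = a  and  X_0 = a, X_{1/3} = b) = 0 while P(X_0 = a, X_{1/3} = b) > 0,
    -- i.e. P(X_1 = a | X_0 = a, X_{1/3} = b) = 0:
    Pmix {ω | ω 0 = 0 ∧ ω (1/3) = 1 ∧ ω 1 = 0} = 0 ∧
    0 < Pmix {ω | ω 0 = 0 ∧ ω (1/3) = 1} ∧
    -- P(X_1 = a | X_{1/3} = b) = 1/2:
    2 * Pmix {ω | ω (1/3) = 1 ∧ ω 1 = 0} = Pmix {ω | ω (1/3) = 1} ∧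
    ¬ IsForwardMarkov Xc Pmix ∧
    ¬ IsMarkov Xc Pmix := by
  refine ⟨inferInstanceAs (IsProbabilityMeasure (diracMix wabc wcba)), isReciprocal_Pmix,
    ?_, ?_, ?_, not_isForwardMarkov_Pmix, not_isMarkov_Pmix⟩
  · rw [Pmix_eq_diracMix, diracMix_apply (by measurability)]
    norm_num [Set.indicator_apply]
  · rw [Pmix_eq_diracMix, diracMix_apply (by measurability)]
    norm_num [Set.indicator_apply]
  · rw [Pmix_eq_diracMix, diracMix_apply (by measurability), diracMix_apply (by measurability)]
    norm_num [Set.indicator_apply]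
    exact mul_comm _ _

end ThreeStates
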